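/- Let f: ℝ^m → ℝ^n be K-Lipschitz, and suppose a classifier predicts argmax of f. If for input x the margin between the largest output coordinate f(x)_{i*} and every other coordinate f(x)_j exceeds √2·K·ε, then the predicted class is unchanged for every perturbation δ with ‖δ‖₂ ≤ ε. -/
import Mathlib

lemma pair_le_sqrt_two_norm {n : ℕ} (g : EuclideanSpace ℝ (Fin n)) (i j : Fin n)
    (hij : i ≠ j) : |g i| + |g j| ≤ Real.sqrt 2 * ‖g‖ := by
  have hsum : g i ^ 2 + g j ^ 2 ≤ ‖g‖ ^ 2 := by
    have h1 : ‖g‖ ^ 2 = ∑ k, ‖g k‖ ^ 2 := by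
      rw [EuclideanSpace.norm_eq]
      rw [Real.sq_sqrt (by positivity)]
    rw [h1]
    have h2 : ∑ k ∈ ({i, j} : Finset (Fin n)), ‖g k‖ ^ 2 ≤ ∑ k, ‖g k‖ ^ 2 :=
      Finset.sum_le_sum_of_subset_of_nonneg (Finset.subset_univ _)
        (fun k _ _ => by positivity)
    rwa [Finset.sum_pair hij, Real.norm_eq_abs, Real.norm_eq_abs, sq_abs, sq_abs] at h2
  have hsq : (|g i| + |g j|) ^ 2 ≤ 2 * ‖g‖ ^ 2 := by
    nlinarith [sq_nonneg (|g i| - |g j|), sq_abs (g i), sq_abs (g j)]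
  calc |g i| + |g j| = Real.sqrt ((|g i| + |g j|) ^ 2) := by
        rw [Real.sqrt_sq (by positivity)]
    _ ≤ Real.sqrt (2 * ‖g‖ ^ 2) := Real.sqrt_le_sqrt hsq
    _ = Real.sqrt 2 * ‖g‖ := by
        rw [Real.sqrt_mul (by norm_num), Real.sqrt_sq (norm_nonneg g)]

theorem margin_robustness (m n : ℕ) (K ε : ℝ) (hK : 0 ≤ K) (hε : 0 < ε)
    (f : EuclideanSpace ℝ (Fin m) → EuclideanSpace ℝ (Fin n))
    (hf : ∀ x y, ‖f x - f y‖ ≤ K * ‖x - y‖)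
    (x : EuclideanSpace ℝ (Fin m)) (istar : Fin n)
    (hmargin : ∀ j : Fin n, j ≠ istar → f x istar - f x j > Real.sqrt 2 * K * ε) :
    ∀ δ : EuclideanSpace ℝ (Fin m), ‖δ‖ ≤ ε →
      ∀ j : Fin n, j ≠ istar → f (x + δ) j < f (x + δ) istar := by
  intro δ hδ j hj
  set g := f (x + δ) - f x with hg
  have hnorm : ‖g‖ ≤ K * ε := by
    calc ‖g‖ ≤ K * ‖(x + δ) - x‖ := hf _ _
    _ = K * ‖δ‖ := by rw [add_sub_cancel_left]
    _ ≤ K * ε := by exact mul_le_mul_of_nonneg_left hδ hK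
  have hpair : |g istar| + |g j| ≤ Real.sqrt 2 * ‖g‖ :=
    pair_le_sqrt_two_norm g istar j (fun h => hj h.symm)
  have hm := hmargin j hj
  have hle : Real.sqrt 2 * ‖g‖ ≤ Real.sqrt 2 * (K * ε) :=
    mul_le_mul_of_nonneg_left hnorm (Real.sqrt_nonneg 2)
  have e1 : g istar = f (x + δ) istar - f x istar := rfl
  have e2 : g j = f (x + δ) j - f x j := rfl
  have hi := neg_abs_le (g istar)
  have hj' := le_abs_self (g j)
  have : Real.sqrt 2 * (K * ε) = Real.sqrt 2 * K * ε := by ring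
  linarith
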